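/- Fix p, q > 0, d > 0, k > 0. Let ρ(x;σ) = (1/(2σ)) e^{-|x|/σ} be the Laplace density with scale σ, and let l = d/(k+1) + (kσ/(k+1)) log(kp/q), so that p ρ(l;σ) = q ρ(d-l; kσ). Then lim_{σ→0⁺} [∫_0^d dx / (p ρ(x;σ) + q ρ(d-x;kσ))] / [(2σ²/p) e^{l/σ}] = ∫_0^∞ dy/(1 + y^{(k+1)/k}). -/

import Mathlib

open MeasureTheory Real Filter

/-- The Laplace density with scale `σ`. -/
noncomputable def laplacePDF (σ x : ℝ) : ℝ := (1 / (2 * σ)) * Real.exp (-|x| / σ)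

/-!
With `l` the matching point, the substitution `u = exp ((x - l) / σ)` turns the integrand into
`(2 σ² / p) e^{l/σ} · 1 / (1 + u^{(k+1)/k})` exactly: the matching condition makes the two Laplace
terms equal to `u⁻¹` and `u^{1/k}` times the same constant. The normalised integral is therefore
`∫ 1 / (1 + u^{(k+1)/k})` over `[e^{-l/σ}, e^{(d-l)/σ}]`, an interval that increases to `(0, ∞)` as
`σ → 0⁺`, and the integrand is integrable there because `(k+1)/k > 1`.
-/

open Set Topology

section IntervalIntegral

variable {E : Type*} [NormedAddCommGroup E] [NormedSpace ℝ E]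

theorem tendsto_intervalIntegral_of_integrableOn_Ioi {ι : Type*} {l : Filter ι}
    [l.IsCountablyGenerated] {f : ℝ → E} {c : ℝ} (hf : IntegrableOn f (Ioi c))
    {a b : ι → ℝ} (ha : Tendsto a l (𝓝[≥] c)) (hb : Tendsto b l atTop) :
    Tendsto (fun i => ∫ x in a i..b i, f x) l (𝓝 (∫ x in Ioi c, f x)) := by
  have hint : ∀ x, c ≤ x → IntervalIntegrable f volume c x := fun x hx =>
    (intervalIntegrable_iff_integrableOn_Ioc_of_le hx).2 (hf.mono_set Ioc_subset_Ioi_self)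
  have hprimitive : ContinuousWithinAt (fun x => ∫ t in c..x, f t) (Icc c (c + 1)) c := by
    have hc : c ≤ c + 1 := by linarith
    rw [← uIcc_of_le hc]
    exact intervalIntegral.continuousOn_primitive_interval' (hint _ hc) left_mem_uIcc c
      left_mem_uIcc
  have hlower : Tendsto (fun i => ∫ x in c..a i, f x) l (𝓝 0) := by
    rw [← intervalIntegral.integral_same (a := c) (f := f)]
    rw [ContinuousWithinAt, nhdsWithin_Icc_eq_nhdsGE (by linarith)] at hprimitive
    exact hprimitive.comp ha
  have hdiff := (intervalIntegral_tendsto_integral_Ioi c hf hb).sub hlower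
  rw [sub_zero] at hdiff
  refine hdiff.congr' ?_
  filter_upwards [ha.eventually self_mem_nhdsWithin, hb.eventually_ge_atTop c] with i hai hbi
  exact intervalIntegral.integral_interval_sub_left (hint _ hbi) (hint _ hai)

theorem intervalIntegral.integral_exp_div_smul_comp_exp {g : ℝ → E} (hg : ContinuousOn g (Ioi 0))
    (a b m σ : ℝ) :
    ∫ x in a..b, (exp ((x - m) / σ) / σ) • g (exp ((x - m) / σ)) =
      ∫ u in exp ((a - m) / σ)..exp ((b - m) / σ), g u := by
  have hderiv : ∀ x, HasDerivAt (fun x => exp ((x - m) / σ)) (exp ((x - m) / σ) / σ) x := by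
    intro x
    simpa [div_eq_mul_inv] using (((hasDerivAt_id x).sub_const m).div_const σ).exp
  exact intervalIntegral.integral_deriv_smul_comp' (fun x _ => hderiv x) (by fun_prop)
    (hg.mono (by rintro _ ⟨x, -, rfl⟩; exact exp_pos _))

end IntervalIntegral

theorem integrableOn_Ioi_one_div_one_add_rpow {r : ℝ} (hr : 1 < r) :
    IntegrableOn (fun u : ℝ => 1 / (1 + u ^ r)) (Ioi 0) := by
  have hmeas : AEStronglyMeasurable (fun u : ℝ => 1 / (1 + u ^ r)) :=
    (measurable_const.div (measurable_const.add
      (continuous_rpow_const (by linarith)).measurable)).aestronglyMeasurable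
  have hnear : IntegrableOn (fun u : ℝ => 1 / (1 + u ^ r)) (Ioc 0 1) := by
    refine Measure.integrableOn_of_bounded (M := 1) (by simp) hmeas ?_
    filter_upwards [ae_restrict_mem measurableSet_Ioc] with u hu
    have := rpow_nonneg hu.1.le r
    rw [norm_of_nonneg (by positivity), div_le_one (by positivity)]
    linarith
  have hfar : IntegrableOn (fun u : ℝ => 1 / (1 + u ^ r)) (Ioi 1) := by
    refine (integrableOn_Ioi_rpow_of_lt (by linarith : -r < -1) one_pos).mono' hmeas.restrict ?_
    filter_upwards [ae_restrict_mem measurableSet_Ioi] with u (hu : 1 < u)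
    have hur := rpow_pos_of_pos (zero_lt_one.trans hu) r
    rw [norm_of_nonneg (by positivity), rpow_neg (by linarith), one_div]
    exact inv_anti₀ hur (by linarith)
  rw [← Ioc_union_Ioi_eq_Ioi zero_le_one]
  exact hnear.union hfar

theorem tendsto_div_add_const_nhdsGT_zero_atTop {c : ℝ} (hc : 0 < c) (e : ℝ) :
    Tendsto (fun σ => c / σ + e) (𝓝[>] 0) atTop := by
  simpa only [div_eq_mul_inv] using
    tendsto_atTop_add_const_right _ e (tendsto_inv_nhdsGT_zero.const_mul_atTop hc)

/-- The paper's `l`, solving `p ρ(l; σ) = q ρ(d - l; k σ)`. -/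
noncomputable def laplaceMatchPoint (p q d k σ : ℝ) : ℝ :=
  d / (k + 1) + (k * σ / (k + 1)) * Real.log (k * p / q)

section MatchPoint

variable {p q d k σ : ℝ}

theorem laplaceMatchPoint_matching (hp : 0 < p) (hq : 0 < q) (hk : 0 < k) (hσ : σ ≠ 0) :
    q * exp (-(d - laplaceMatchPoint p q d k σ) / (k * σ)) =
      k * p * exp (-laplaceMatchPoint p q d k σ / σ) := by
  have hkp : 0 < k * p := by positivity
  calc q * exp (-(d - laplaceMatchPoint p q d k σ) / (k * σ))
      = exp (log q + -(d - laplaceMatchPoint p q d k σ) / (k * σ)) := by rw [exp_add, exp_log hq]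
    _ = exp (log (k * p) + -laplaceMatchPoint p q d k σ / σ) := by
      rw [laplaceMatchPoint, log_div hkp.ne' hq.ne']
      congr 1
      field_simp
      ring
    _ = k * p * exp (-laplaceMatchPoint p q d k σ / σ) := by rw [exp_add, exp_log hkp]

theorem sub_laplaceMatchPoint_div (hσ : σ ≠ 0) (A : ℝ) :
    (A - laplaceMatchPoint p q d k σ) / σ =
      (A - d / (k + 1)) / σ - k / (k + 1) * Real.log (k * p / q) := by
  rw [laplaceMatchPoint]
  field_simp
  ring

theorem tendsto_exp_neg_laplaceMatchPoint_div (hd : 0 < d) (hk : 0 < k) :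
    Tendsto (fun σ => exp ((0 - laplaceMatchPoint p q d k σ) / σ)) (𝓝[>] 0) (𝓝[≥] 0) := by
  have hexponent := tendsto_div_add_const_nhdsGT_zero_atTop (by positivity : 0 < d / (k + 1))
    (k / (k + 1) * Real.log (k * p / q))
  refine tendsto_nhdsWithin_iff.2 ⟨?_, .of_forall fun σ => (exp_pos _).le⟩
  refine (tendsto_exp_neg_atTop_nhds_zero.comp hexponent).congr' ?_
  filter_upwards [self_mem_nhdsWithin] with σ (hσ : 0 < σ)
  simp only [Function.comp, sub_laplaceMatchPoint_div hσ.ne']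
  congr 1
  ring

theorem tendsto_exp_sub_laplaceMatchPoint_div_atTop (hd : 0 < d) (hk : 0 < k) :
    Tendsto (fun σ => exp ((d - laplaceMatchPoint p q d k σ) / σ)) (𝓝[>] 0) atTop := by
  have hc : 0 < d - d / (k + 1) := sub_pos.2 (div_lt_self hd (by linarith))
  refine tendsto_exp_atTop.comp <|
    (tendsto_div_add_const_nhdsGT_zero_atTop hc (-(k / (k + 1) * Real.log (k * p / q)))).congr' ?_
  filter_upwards [self_mem_nhdsWithin] with σ (hσ : 0 < σ)
  rw [sub_laplaceMatchPoint_div hσ.ne']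
  ring

theorem one_div_laplace_mixture_eq (hp : 0 < p) (hq : 0 < q) (hk : 0 < k) (hσ : 0 < σ) {x : ℝ}
    (hx₀ : 0 ≤ x) (hxd : x ≤ d) :
    1 / (p * laplacePDF σ x + q * laplacePDF (k * σ) (d - x)) =
      (2 * σ ^ 2 / p) * exp (laplaceMatchPoint p q d k σ / σ) *
        ((exp ((x - laplaceMatchPoint p q d k σ) / σ) / σ) •
          (1 / (1 + exp ((x - laplaceMatchPoint p q d k σ) / σ) ^ ((k + 1) / k)))) := by
  set m := laplaceMatchPoint p q d k σ
  set t := (x - m) / σ with ht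
  have hmatch := laplaceMatchPoint_matching (d := d) hp hq hk hσ.ne'
  have hleft : exp (-x / σ) = exp (-m / σ) * (exp t)⁻¹ := by
    rw [← exp_neg, ← exp_add, ht]; congr 1; field_simp; ring
  have hright : exp (-(d - x) / (k * σ)) = exp (-(d - m) / (k * σ)) * exp (t / k) := by
    rw [← exp_add, ht]; congr 1; field_simp; ring
  have hpow : exp t ^ ((k + 1) / k) = exp t * exp (t / k) := by
    rw [← exp_mul, ← exp_add]; congr 1; field_simp
  have hcentre : exp (m / σ) = (exp (-m / σ))⁻¹ := by rw [← exp_neg, neg_div, neg_neg]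
  simp only [laplacePDF, abs_of_nonneg hx₀, abs_of_nonneg (sub_nonneg.2 hxd), smul_eq_mul,
    hleft, hright, hpow, hcentre]
  rw [show q * (1 / (2 * (k * σ)) * (exp (-(d - m) / (k * σ)) * exp (t / k))) =
      q * exp (-(d - m) / (k * σ)) * exp (t / k) / (2 * k * σ) by ring, hmatch]
  have := exp_pos (-m / σ)
  have := exp_pos t
  have := exp_pos (t / k)
  field_simp
  ring

theorem laplace_ratio_eq_integral (hp : 0 < p) (hq : 0 < q) (hd : 0 ≤ d) (hk : 0 < k)
    (hσ : 0 < σ) :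
    (∫ x in (0 : ℝ)..d, 1 / (p * laplacePDF σ x + q * laplacePDF (k * σ) (d - x))) /
        ((2 * σ ^ 2 / p) * exp (laplaceMatchPoint p q d k σ / σ)) =
      ∫ u in exp ((0 - laplaceMatchPoint p q d k σ) / σ)..exp ((d - laplaceMatchPoint p q d k σ) / σ),
        1 / (1 + u ^ ((k + 1) / k)) := by
  have hg : ContinuousOn (fun u : ℝ => 1 / (1 + u ^ ((k + 1) / k))) (Ioi 0) := by
    refine continuousOn_const.div (continuousOn_const.add
      (continuousOn_id.rpow_const fun u hu => Or.inl (ne_of_gt hu))) fun u hu => ?_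
    have := rpow_pos_of_pos (mem_Ioi.1 hu) ((k + 1) / k)
    positivity
  rw [intervalIntegral.integral_congr fun x hx => one_div_laplace_mixture_eq hp hq hk hσ
      (uIcc_of_le hd ▸ hx).1 (uIcc_of_le hd ▸ hx).2,
    intervalIntegral.integral_const_mul, intervalIntegral.integral_exp_div_smul_comp_exp hg,
    mul_div_cancel_left₀ _ (by positivity)]

end MatchPoint

theorem laplace_scaling_limit (p q d k : ℝ) (hp : 0 < p) (hq : 0 < q)
    (hd : 0 < d) (hk : 0 < k) :
    Tendsto
      (fun σ : ℝ =>
        (∫ x in (0 : ℝ)..d, 1 / (p * laplacePDF σ x + q * laplacePDF (k * σ) (d - x))) /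
          ((2 * σ ^ 2 / p) *
            Real.exp ((d / (k + 1) + (k * σ / (k + 1)) * Real.log (k * p / q)) / σ)))
      (nhdsWithin 0 (Set.Ioi 0))
      (nhds (∫ y in Set.Ioi (0 : ℝ), 1 / (1 + y ^ ((k + 1) / k)))) := by
  have hr : 1 < (k + 1) / k := by rw [lt_div_iff₀ hk]; linarith
  refine (tendsto_intervalIntegral_of_integrableOn_Ioi (integrableOn_Ioi_one_div_one_add_rpow hr)
    (tendsto_exp_neg_laplaceMatchPoint_div (p := p) (q := q) hd hk)
    (tendsto_exp_sub_laplaceMatchPoint_div_atTop (p := p) (q := q) hd hk)).congr' ?_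
  filter_upwards [self_mem_nhdsWithin] with σ (hσ : 0 < σ)
  exact (laplace_ratio_eq_integral hp hq hd.le hk hσ).symm
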